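/- arXiv:2209.09293 — 7 statements merged into one kernel-verified Lean document; each statement's English description precedes it below -/
import Mathlib

section
/- Let X be a countably infinite set and let E be a contraction (a set function with E(Z) ⊆ Z for every finite Z ⊆ X). Then the lexicographic composition L_E preserves path independence over the class C^res of responsive choice functions if and only if the set function I\E, defined by (I\E)(Z) = Z \ E(Z), is cardinal-linear. -/
/-! Common definitions: choice functions on a countably infinite set of items,
lexicographic composition subject to an exclusion function, and the various
properties from the paper. Items form a type `X`; finite subsets of `X` are
`Finset X`; set functions are maps `Finset X → Set X`. -/

open scoped Classical

variable {X : Type*}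

/-- A choice function selects a subset of its input. -/
def IsChoice (C : Finset X → Finset X) : Prop := ∀ Y, C Y ⊆ Y

/-- Lexicographic composition of `C1` and `C2` subject to the exclusion
function `E`:  `Y ↦ C1(Y) ∪ C2(Y \ E(C1(Y)))`. -/
noncomputable def lexComp (E : Finset X → Set X) (C1 C2 : Finset X → Finset X) :
    Finset X → Finset X :=
  fun Y => C1 Y ∪ C2 (Y.filter (fun y => y ∉ E (C1 Y)))

/-- Path independence: `C(Y ∪ Y') = C(C(Y) ∪ C(Y'))`. -/
def PathIndependent (C : Finset X → Finset X) : Prop :=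
  ∀ Y Y' : Finset X, C (Y ∪ Y') = C (C Y ∪ C Y')

/-- Substitutes: the rejection function is monotone. -/
def Substitutes (C : Finset X → Finset X) : Prop :=
  ∀ Y Y' : Finset X, Y ⊆ Y' → Y \ C Y ⊆ Y' \ C Y'

/-- Size monotonicity (law of aggregate demand). -/
def SizeMonotonic (C : Finset X → Finset X) : Prop :=
  ∀ Y Y' : Finset X, Y ⊆ Y' → (C Y).card ≤ (C Y').card

/-- Consistency: `C(Y') ⊆ Y ⊆ Y'` implies `C(Y) = C(Y')`. -/
def Consistent (C : Finset X → Finset X) : Prop :=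
  ∀ Y Y' : Finset X, C Y' ⊆ Y → Y ⊆ Y' → C Y = C Y'

/-- The `q` highest-ranked acceptable elements of `Y`, with respect to a linear
order `r` on `X ∪ {∅}` (modelled as `Option X`, `none` playing the role of the
outside option `∅`): `y` is chosen iff `y ≻ ∅` and fewer than `q` acceptable
elements of `Y` are ranked strictly above `y`. -/
noncomputable def topChoice (r : LinearOrder (Option X)) (q : ℕ) (Y : Finset X) : Finset X :=
  Y.filter (fun y => r.lt none (some y) ∧
    (Y.filter (fun z => r.lt none (some z) ∧ r.lt (some y) (some z))).card < q)

/-- `C` is responsive to the linear order `r` on `X ∪ {∅}` and quota `q`. -/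
def ResponsiveWith (r : LinearOrder (Option X)) (q : ℕ) (C : Finset X → Finset X) : Prop :=
  ∀ Y : Finset X, C Y = topChoice r q Y

/-- Responsive choice functions (the class `C^res`). -/
def Responsive (C : Finset X → Finset X) : Prop :=
  ∃ (r : LinearOrder (Option X)) (q : ℕ), ResponsiveWith r q C

/-- Single-valued responsive choice functions (the class `C^{sv-res}`): quota 1. -/
def SVResponsive (C : Finset X → Finset X) : Prop :=
  ∃ r : LinearOrder (Option X), ResponsiveWith r 1 C

/-- `E` is threshold-linear with cardinal reuse with respect to the parameters
`t ∈ ℕ ∪ {0,∞}`, `K ⊆ X` and the chain `∅ = T^0 ⊆ T^1 ⊆ ⋯ ⊆ T^t ⊆ X \ K`: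
for every finite `Z`, if `|Z| < t` then `E(Z) = (Z \ T^{|Z|}) ∪ K`, and
otherwise `G_E(Z) = E(Z) ∪ Z = X`. -/
def TLCRWith (E : Finset X → Set X) (t : ℕ∞) (K : Set X) (T : ℕ → Set X) : Prop :=
  T 0 = ∅ ∧ (∀ n : ℕ, (n : ℕ∞) < t → T n ⊆ T (n + 1)) ∧
  (∀ n : ℕ, (n : ℕ∞) ≤ t → T n ⊆ Kᶜ) ∧
  ∀ Z : Finset X,
    ((Z.card : ℕ∞) < t → E Z = ((Z : Set X) \ T Z.card) ∪ K) ∧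
    (¬ (Z.card : ℕ∞) < t → E Z ∪ (Z : Set X) = Set.univ)

/-- `E` is threshold-linear with cardinal reuse (for some parameters). -/
def TLCR (E : Finset X → Set X) : Prop :=
  ∃ (t : ℕ∞) (K : Set X) (T : ℕ → Set X), TLCRWith E t K T

/-- A dilation `D` is threshold-linear (with threshold `t`), where `K = D(∅)`:
`D(Z) = Z ∪ K` when `|Z| < t`, and `D(Z) = X` otherwise. -/
def ThresholdLinear (D : Finset X → Set X) : Prop :=
  ∃ t : ℕ∞, ∀ Z : Finset X,
    ((Z.card : ℕ∞) < t → D Z = (Z : Set X) ∪ D ∅) ∧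
    (¬ (Z.card : ℕ∞) < t → D Z = Set.univ)

/-- A set function `F` (valued inside its argument) is cardinal-linear:
there is a weakly increasing sequence `∅ = T^0 ⊆ T^1 ⊆ ⋯` with
`F(Z) = Z ∩ T^{|Z|}` for every finite `Z`. -/
def CardinalLinear (F : Finset X → Set X) : Prop :=
  ∃ T : ℕ → Set X, T 0 = ∅ ∧ Monotone T ∧
    ∀ Z : Finset X, F Z = (Z : Set X) ∩ T Z.card

section Equiv

variable (s : Setoid X)

/-- A finite set is feasible if it contains at most one element of each
equivalence class. -/
def Feasible (Z : Finset X) : Prop :=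
  ∀ x ∈ Z, ∀ z ∈ Z, x ≠ z → ¬ s.r x z

/-- A choice function is many-to-one if it always selects a feasible set. -/
def ManyToOne (C : Finset X → Finset X) : Prop :=
  ∀ Y : Finset X, Feasible s (C Y)

/-- `I_Z`: the union of the equivalence classes of the members of `Z`. -/
def IClass (Z : Finset X) : Set X := {y | ∃ x ∈ Z, s.r y x}

/-- `E` is equivalence-excluding: `Z ∪ E(Z) ⊇ I_Z` for every feasible `Z`. -/
def EquivExcluding (E : Finset X → Set X) : Prop :=
  ∀ Z : Finset X, Feasible s Z → IClass s Z ⊆ (Z : Set X) ∪ E Z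

/-- `Cbar` completes `C`: whenever `Cbar(Y)` is feasible, `Cbar(Y) = C(Y)`. -/
def Completes (Cbar C : Finset X → Finset X) : Prop :=
  ∀ Y : Finset X, Feasible s (Cbar Y) → Cbar Y = C Y

/-- `E` is many-to-one threshold-linear with cardinal reuse with the parameters
`t`, `K`, `{T^n}`: the displayed condition holds for every *feasible* `Z`:
if `Z ∪ K ≠ X` and `|Z| < t` then `E(Z) = (Z \ T^{|Z|}) ∪ K`, and otherwise
`G_E(Z) = X`. -/
def MtoTLCRWith (E : Finset X → Set X) (t : ℕ∞) (K : Set X) (T : ℕ → Set X) : Prop :=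
  T 0 = ∅ ∧ (∀ n : ℕ, (n : ℕ∞) < t → T n ⊆ T (n + 1)) ∧
  (∀ n : ℕ, (n : ℕ∞) ≤ t → T n ⊆ Kᶜ) ∧
  ∀ Z : Finset X, Feasible s Z →
    (((Z : Set X) ∪ K ≠ Set.univ ∧ (Z.card : ℕ∞) < t) →
      E Z = ((Z : Set X) \ T Z.card) ∪ K) ∧
    (¬ ((Z : Set X) ∪ K ≠ Set.univ ∧ (Z.card : ℕ∞) < t) →
      E Z ∪ (Z : Set X) = Set.univ)

end Equiv

/-! Say `Z` keeps `x` when `x ∈ Z \ E Z`. Since items are unlimited, `I \ E` is cardinal-linear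
exactly when keeping is monotone in size: if `Z` keeps `x`, so does every `Z' ∋ x` with
`|Z| ≤ |Z'|` (`RetentionCardMonotone`).

If `Z` keeps `x` but `Z'` does not, take a fresh item `w`, let `C1` choose the `|Z'|` best items of
`Z ∪ Z'` with `Z'` ranked first, and let `C2` choose one of `x ≻ w`. From `Z ∪ {w}` the first stage
chooses `Z`, which keeps `x`, so `w` is not chosen; from `Z ∪ {w} ∪ Z'` it chooses `Z'`, which
excludes `x`, so `C2` chooses `w`. Path independence fails at `(Z ∪ {w}) ∪ Z'`.

Conversely, let `C1` and `C2` be substitutable and consistent, and `C1` size-monotone (as responsive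
choice functions are). For `Y ⊆ U`, the set `C1 Y` is no larger than `C1 U`, so an item of `C1 U`
kept by `C1 Y` is kept by `C1 U`. Hence whatever `C2` picks from what `C1 U` leaves of `U` is also
picked from `Y` whenever it lies in `Y`, and consistency of `C1` and `C2` gives path
independence. -/

theorem Finset.card_filter_card_filter_gt_lt {α : Type*} [LinearOrder α] (s : Finset α) (q : ℕ) :
    (s.filter fun a => (s.filter (a < ·)).card < q).card = min q s.card := by
  induction s using Finset.induction_on_max generalizing q with
  | empty => simp
  | insert m s hm ih =>
    have hms : m ∉ s := fun h => lt_irrefl m (hm m h)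
    have htop : (insert m s).filter (m < ·) = ∅ :=
      Finset.filter_eq_empty_iff.2 fun b hb => by
        rcases Finset.mem_insert.1 hb with rfl | hb
        exacts [lt_irrefl b, (hm b hb).not_gt]
    have hbelow : ∀ a ∈ s, ((insert m s).filter (a < ·)).card = (s.filter (a < ·)).card + 1 :=
      fun a ha => by
        rw [Finset.filter_insert, if_pos (hm a ha),
          Finset.card_insert_of_notMem fun h => hms (Finset.mem_filter.1 h).1]
    cases q with
    | zero => simp
    | succ q =>
      rw [Finset.filter_insert, if_pos (by rw [htop]; simp), Finset.card_insert_of_notMem hms,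
        Finset.card_insert_of_notMem fun h => hms (Finset.mem_filter.1 h).1,
        Finset.filter_congr fun a ha => by rw [hbelow a ha, Nat.add_lt_add_iff_right], ih q]
      omega

section TopChoice

variable (r : LinearOrder (Option X)) (q : ℕ)

noncomputable def acceptable (Y : Finset X) : Finset X :=
  Y.filter fun y => r.lt none (some y)

lemma topChoice_eq_filter_acceptable (Y : Finset X) :
    topChoice r q Y = (acceptable r Y).filter
      fun y => ((acceptable r Y).filter fun z => r.lt (some y) (some z)).card < q := by
  simp only [topChoice, acceptable, Finset.filter_filter]

lemma topChoice_subset_acceptable (Y : Finset X) : topChoice r q Y ⊆ acceptable r Y := by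
  rw [topChoice_eq_filter_acceptable]
  exact Finset.filter_subset _ _

lemma card_topChoice (Y : Finset X) :
    (topChoice r q Y).card = min q (acceptable r Y).card := by
  let : LinearOrder X := LinearOrder.lift' some (Option.some_injective X)
  rw [topChoice_eq_filter_acceptable]
  exact Finset.card_filter_card_filter_gt_lt _ q

lemma topChoice_eq_acceptable {Y : Finset X} (h : (acceptable r Y).card ≤ q) :
    topChoice r q Y = acceptable r Y :=
  Finset.eq_of_subset_of_card_le (topChoice_subset_acceptable r q Y)
    (by rw [card_topChoice, min_eq_right h])

lemma topChoice_eq_of_forall_lt {Y A : Finset X} (hA : A ⊆ acceptable r Y) (hq : A.card = q)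
    (hlt : ∀ y ∈ acceptable r Y, y ∉ A → ∀ a ∈ A, r.lt (some y) (some a)) :
    topChoice r q Y = A := by
  let := r
  refine (Finset.eq_of_subset_of_card_le (fun a ha => ?_) ?_).symm
  · rw [topChoice_eq_filter_acceptable, Finset.mem_filter]
    refine ⟨hA ha, lt_of_lt_of_le (Finset.card_lt_card ⟨fun z hz => ?_, fun h => ?_⟩) hq.le⟩
    · rw [Finset.mem_filter] at hz
      by_contra hzA
      exact (hz.2.trans (hlt z hz.1 hzA a ha)).false
    · exact lt_irrefl _ (Finset.mem_filter.1 (h ha)).2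
  · rw [card_topChoice, hq]
    exact min_le_left _ _

lemma mem_topChoice_of_subset {Y Y' : Finset X} (h : Y ⊆ Y') {v : X} (hv : v ∈ topChoice r q Y')
    (hvY : v ∈ Y) : v ∈ topChoice r q Y := by
  simp only [topChoice, Finset.mem_filter] at hv ⊢
  exact ⟨hvY, hv.2.1, (Finset.card_le_card (Finset.filter_subset_filter _ h)).trans_lt hv.2.2⟩

lemma topChoice_isChoice : IsChoice (topChoice r q) :=
  fun _ => Finset.filter_subset _ _

lemma topChoice_substitutes : Substitutes (topChoice r q) := fun _ _ h v hv => by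
  obtain ⟨hvY, hvC⟩ := Finset.mem_sdiff.1 hv
  exact Finset.mem_sdiff.2 ⟨h hvY, fun hv' => hvC (mem_topChoice_of_subset r q h hv' hvY)⟩

lemma topChoice_sizeMonotonic : SizeMonotonic (topChoice r q) := fun _ _ h => by
  simp only [card_topChoice]
  exact min_le_min le_rfl (Finset.card_le_card (Finset.filter_subset_filter _ h))

lemma topChoice_consistent : Consistent (topChoice r q) := fun _ _ h₁ h₂ =>
  (Finset.eq_of_subset_of_card_le (fun _ hv => mem_topChoice_of_subset r q h₂ hv (h₁ hv))
    (topChoice_sizeMonotonic r q _ _ h₂)).symm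

end TopChoice

section TierOrder

variable {α : Type*}

noncomputable abbrev scoreOrder (p : α → ℕ) : LinearOrder α :=
  let _ : LinearOrder α := IsWellOrder.linearOrder WellOrderingRel
  LinearOrder.lift' (fun a => toLex (p a, a)) fun _ _ h => congrArg (fun x => (ofLex x).2) h

lemma scoreOrder_lt_of_lt (p : α → ℕ) {a b : α} (h : p a < p b) : (scoreOrder p).lt a b :=
  Prod.Lex.left _ _ h

lemma le_of_scoreOrder_lt (p : α → ℕ) {a b : α} (h : (scoreOrder p).lt a b) : p a ≤ p b := by
  let _ := scoreOrder p
  by_contra! hba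
  exact (h.trans (scoreOrder_lt_of_lt p hba)).false

/-- Ranks `A` above `B` above the outside option `none` above everything else. -/
noncomputable abbrev tierOrder (A B : Finset X) : LinearOrder (Option X) :=
  scoreOrder fun o => o.elim 1 fun v => if v ∈ A then 3 else if v ∈ B then 2 else 0

lemma tierOrder_none_lt_some_iff {A B : Finset X} {v : X} :
    (tierOrder A B).lt none (some v) ↔ v ∈ A ∪ B := by
  constructor
  · intro h
    have := le_of_scoreOrder_lt _ h
    by_contra hv
    simp_all
  · intro h
    apply scoreOrder_lt_of_lt
    rw [Finset.mem_union] at h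
    by_cases hA : v ∈ A <;> simp_all

lemma tierOrder_lt_of_mem {A B : Finset X} {v a : X} (hv : v ∉ A) (ha : a ∈ A) :
    (tierOrder A B).lt (some v) (some a) := by
  apply scoreOrder_lt_of_lt
  by_cases hB : v ∈ B <;> simp [hv, ha, hB]

lemma acceptable_tierOrder (A B Y : Finset X) :
    acceptable (tierOrder A B) Y = Y.filter (· ∈ A ∪ B) := by
  simp only [acceptable, tierOrder_none_lt_some_iff]

lemma topChoice_tierOrder_of_subset {A B Y : Finset X} {q : ℕ} (hq : A.card = q) (hA : A ⊆ Y) :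
    topChoice (tierOrder A B) q Y = A :=
  topChoice_eq_of_forall_lt _ _ (fun v hv => by simp [acceptable_tierOrder, hA hv, hv]) hq
    fun _ _ hy _ ha => tierOrder_lt_of_mem hy ha

lemma topChoice_tierOrder_of_card_le {A B Y : Finset X} {q : ℕ}
    (h : (Y.filter (· ∈ A ∪ B)).card ≤ q) :
    topChoice (tierOrder A B) q Y = Y.filter (· ∈ A ∪ B) := by
  rw [← acceptable_tierOrder] at h ⊢
  exact topChoice_eq_acceptable _ _ h

end TierOrder

def RetentionCardMonotone (E : Finset X → Set X) : Prop :=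
  ∀ ⦃Z Z' : Finset X⦄ ⦃x : X⦄, x ∈ Z → x ∈ Z' → Z.card ≤ Z'.card → x ∉ E Z → x ∉ E Z'

lemma CardinalLinear.retentionCardMonotone {E : Finset X → Set X}
    (h : CardinalLinear fun Z : Finset X => (Z : Set X) \ E Z) : RetentionCardMonotone E := by
  obtain ⟨T, -, hmono, hT⟩ := h
  intro Z Z' x hxZ hxZ' hcard hxE
  have hxT : x ∈ T Z.card := ((Set.ext_iff.1 (hT Z) x).1 ⟨hxZ, hxE⟩).2
  exact ((Set.ext_iff.1 (hT Z') x).2 ⟨hxZ', hmono hcard hxT⟩).2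

lemma RetentionCardMonotone.cardinalLinear [Infinite X] {E : Finset X → Set X}
    (h : RetentionCardMonotone E) : CardinalLinear fun Z : Finset X => (Z : Set X) \ E Z := by
  refine ⟨fun n => {x | ∃ Z : Finset X, Z.card = n ∧ x ∈ Z ∧ x ∉ E Z}, ?_, ?_, fun Z => ?_⟩
  · ext x
    simp
  · refine monotone_nat_of_le_succ fun n x ⟨Z, hZ, hxZ, hxE⟩ => ?_
    obtain ⟨y, hy⟩ := Infinite.exists_notMem_finset Z
    have hcard : (insert y Z).card = n + 1 := by rw [Finset.card_insert_of_notMem hy, hZ]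
    exact ⟨insert y Z, hcard, Finset.mem_insert_of_mem hxZ,
      h hxZ (Finset.mem_insert_of_mem hxZ) (by omega) hxE⟩
  · ext x
    constructor
    · rintro ⟨hxZ, hxE⟩
      exact ⟨hxZ, Z, rfl, hxZ, hxE⟩
    · rintro ⟨hxZ, Z', hcard, hxZ', hxE⟩
      exact ⟨hxZ, h hxZ' hxZ hcard.le hxE⟩

lemma Substitutes.mem_of_subset {C : Finset X → Finset X} (h : Substitutes C) {Y Y' : Finset X}
    (hY : Y ⊆ Y') {v : X} (hv : v ∈ C Y') (hvY : v ∈ Y) : v ∈ C Y := by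
  by_contra hv'
  exact (Finset.mem_sdiff.1 (h Y Y' hY (Finset.mem_sdiff.2 ⟨hvY, hv'⟩))).2 hv

section Backward

variable {E : Finset X → Set X} {C1 C2 : Finset X → Finset X}

lemma lexComp_subset (h1 : IsChoice C1) (h2 : IsChoice C2) (Y : Finset X) :
    lexComp E C1 C2 Y ⊆ Y :=
  Finset.union_subset (h1 Y) ((h2 _).trans (Finset.filter_subset _ Y))

lemma mem_lexComp_of_mem_first (h1 : Substitutes C1) {Y U : Finset X} (hYU : Y ⊆ U) {v : X}
    (hv : v ∈ C1 U) (hvY : v ∈ Y) : v ∈ lexComp E C1 C2 Y :=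
  Finset.mem_union_left _ (h1.mem_of_subset hYU hv hvY)

lemma notMem_exclusion_of_subset (hcontr : ∀ Z : Finset X, E Z ⊆ (Z : Set X))
    (hret : RetentionCardMonotone E) (h1s : Substitutes C1) (h1m : SizeMonotonic C1)
    {Y U : Finset X} (hYU : Y ⊆ U) {u : X} (hu : u ∈ Y) (huE : u ∉ E (C1 Y)) :
    u ∉ E (C1 U) := by
  by_cases huC : u ∈ C1 U
  · exact hret (h1s.mem_of_subset hYU huC hu) huC (h1m _ _ hYU) huE
  · exact fun h => huC (hcontr _ h)

lemma mem_lexComp_of_mem_second (hcontr : ∀ Z : Finset X, E Z ⊆ (Z : Set X))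
    (hret : RetentionCardMonotone E) (h1s : Substitutes C1) (h1m : SizeMonotonic C1)
    (h2s : Substitutes C2) {Y U : Finset X} (hYU : Y ⊆ U) {v : X}
    (hv : v ∈ C2 (U.filter (· ∉ E (C1 U)))) (hvY : v ∈ Y) : v ∈ lexComp E C1 C2 Y := by
  by_cases hvC : v ∈ C1 Y
  · exact Finset.mem_union_left _ hvC
  refine Finset.mem_union_right _ (h2s.mem_of_subset (fun u hu => ?_) hv ?_)
  · rw [Finset.mem_filter] at hu ⊢
    exact ⟨hYU hu.1, notMem_exclusion_of_subset hcontr hret h1s h1m hYU hu.1 hu.2⟩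
  · exact Finset.mem_filter.2 ⟨hvY, fun h => hvC (hcontr _ h)⟩

theorem lexComp_pathIndependent (hcontr : ∀ Z : Finset X, E Z ⊆ (Z : Set X))
    (hret : RetentionCardMonotone E) (h1c : IsChoice C1) (h1s : Substitutes C1)
    (h1m : SizeMonotonic C1) (h1k : Consistent C1) (h2c : IsChoice C2) (h2s : Substitutes C2)
    (h2k : Consistent C2) : PathIndependent (lexComp E C1 C2) := by
  intro Y Y'
  set L := lexComp E C1 C2
  have hW : ∀ v ∈ Y ∪ Y', (∀ Y₀ ⊆ Y ∪ Y', v ∈ Y₀ → v ∈ L Y₀) → v ∈ L Y ∪ L Y' := by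
    intro v hv h
    rcases Finset.mem_union.1 hv with hv | hv
    · exact Finset.mem_union_left _ (h Y Finset.subset_union_left hv)
    · exact Finset.mem_union_right _ (h Y' Finset.subset_union_right hv)
  have hWU : L Y ∪ L Y' ⊆ Y ∪ Y' :=
    Finset.union_subset_union (lexComp_subset h1c h2c Y) (lexComp_subset h1c h2c Y')
  have hfirst : C1 (L Y ∪ L Y') = C1 (Y ∪ Y') :=
    h1k _ _ (fun v hv => hW v (h1c _ hv) fun _ hY => mem_lexComp_of_mem_first h1s hY hv) hWU
  have hsecond : C2 ((L Y ∪ L Y').filter (· ∉ E (C1 (Y ∪ Y')))) =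
      C2 ((Y ∪ Y').filter (· ∉ E (C1 (Y ∪ Y')))) := by
    refine h2k _ _ (fun v hv => ?_) (Finset.filter_subset_filter _ hWU)
    obtain ⟨hvU, hvE⟩ := Finset.mem_filter.1 (h2c _ hv)
    exact Finset.mem_filter.2 ⟨hW v hvU fun _ hY =>
      mem_lexComp_of_mem_second hcontr hret h1s h1m h2s hY hv, hvE⟩
  change C1 (Y ∪ Y') ∪ _ = C1 (L Y ∪ L Y') ∪ C2 ((L Y ∪ L Y').filter (· ∉ E (C1 (L Y ∪ L Y'))))
  rw [hfirst, hsecond]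

end Backward

theorem not_pathIndependent_lexComp_tierOrder {E : Finset X → Set X}
    (hcontr : ∀ Z : Finset X, E Z ⊆ (Z : Set X)) {Z Z' : Finset X} {x w : X} (hxZ : x ∈ Z)
    (hcard : Z.card ≤ Z'.card) (hxE : x ∉ E Z) (hxE' : x ∈ E Z') (hwZ : w ∉ Z) (hwZ' : w ∉ Z') :
    ¬ PathIndependent (lexComp E (topChoice (tierOrder Z' Z) Z'.card)
      (topChoice (tierOrder {x} {w}) 1)) := by
  have hC1small : topChoice (tierOrder Z' Z) Z'.card (Z ∪ {w}) = Z := by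
    have hZ : (Z ∪ {w}).filter (· ∈ Z' ∪ Z) = Z := by
      ext v
      simp only [Finset.mem_filter, Finset.mem_union, Finset.mem_singleton]
      grind
    rw [topChoice_tierOrder_of_card_le (by rwa [hZ]), hZ]
  have hC1big : topChoice (tierOrder Z' Z) Z'.card (Z ∪ {w} ∪ Z') = Z' :=
    topChoice_tierOrder_of_subset rfl Finset.subset_union_right
  have hC2x : ∀ R : Finset X, x ∈ R → topChoice (tierOrder {x} {w}) 1 R = {x} := fun _ hxR =>
    topChoice_tierOrder_of_subset rfl (Finset.singleton_subset_iff.2 hxR)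
  have hC2w : ∀ R : Finset X, x ∉ R → w ∈ R → w ∈ topChoice (tierOrder {x} {w}) 1 R := by
    intro R hxR hwR
    have hw : R.filter (· ∈ ({x} ∪ {w} : Finset X)) = {w} := by
      ext v
      simp only [Finset.mem_filter, Finset.mem_union, Finset.mem_singleton]
      grind
    rw [topChoice_tierOrder_of_card_le (by rw [hw]; rfl), hw]
    exact Finset.mem_singleton_self w
  set C1 := topChoice (tierOrder Z' Z) Z'.card
  set C2 := topChoice (tierOrder {x} {w}) 1
  have hfirst : w ∉ lexComp E C1 C2 (Z ∪ {w}) := by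
    rw [lexComp, hC1small, hC2x _ (Finset.mem_filter.2 ⟨Finset.mem_union_left _ hxZ, hxE⟩)]
    simp only [Finset.mem_union, Finset.mem_singleton, not_or]
    exact ⟨hwZ, fun h => hwZ (h ▸ hxZ)⟩
  have hsecond : w ∈ lexComp E C1 C2 (Z ∪ {w} ∪ Z') := by
    rw [lexComp, hC1big]
    refine Finset.mem_union_right _ (hC2w _ (fun h => (Finset.mem_filter.1 h).2 hxE') ?_)
    exact Finset.mem_filter.2 ⟨by simp, fun h => hwZ' (hcontr Z' h)⟩
  intro hPI
  have h1c : IsChoice C1 := topChoice_isChoice _ _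
  have h2c : IsChoice C2 := topChoice_isChoice _ _
  rw [hPI] at hsecond
  rcases Finset.mem_union.1 (lexComp_subset h1c h2c _ hsecond) with h | h
  · exact hfirst h
  · exact hwZ' (lexComp_subset h1c h2c Z' h)

theorem RetentionCardMonotone.of_preserves_pathIndependent [Infinite X] {E : Finset X → Set X}
    (hcontr : ∀ Z : Finset X, E Z ⊆ (Z : Set X))
    (H : ∀ C1 C2 : Finset X → Finset X, IsChoice C1 → IsChoice C2 →
      Responsive C1 → Responsive C2 → PathIndependent (lexComp E C1 C2)) :
    RetentionCardMonotone E := by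
  intro Z Z' x hxZ _ hcard hxE
  by_contra hxE'
  obtain ⟨w, hw⟩ := Infinite.exists_notMem_finset (Z ∪ Z')
  obtain ⟨hwZ, hwZ'⟩ := Finset.notMem_union.1 hw
  exact not_pathIndependent_lexComp_tierOrder hcontr hxZ hcard hxE hxE' hwZ hwZ'
    (H _ _ (topChoice_isChoice _ _) (topChoice_isChoice _ _) ⟨_, _, fun _ => rfl⟩
      ⟨_, _, fun _ => rfl⟩)

theorem lexComp_contraction_preserves_pi_iff_cardinalLinear_general
    {X : Type*} [Infinite X] (E : Finset X → Set X)
    (hcontr : ∀ Z : Finset X, E Z ⊆ (Z : Set X)) :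
    (∀ C1 C2 : Finset X → Finset X, IsChoice C1 → IsChoice C2 →
        Responsive C1 → Responsive C2 → PathIndependent (lexComp E C1 C2)) ↔
      CardinalLinear (fun Z : Finset X => (Z : Set X) \ E Z) := by
  refine ⟨fun H => (RetentionCardMonotone.of_preserves_pathIndependent hcontr H).cardinalLinear,
    fun hE C1 C2 h1c h2c ⟨r1, q1, h1⟩ ⟨r2, q2, h2⟩ => ?_⟩
  obtain rfl : C1 = topChoice r1 q1 := funext h1
  obtain rfl : C2 = topChoice r2 q2 := funext h2
  exact lexComp_pathIndependent hcontr hE.retentionCardMonotone h1c (topChoice_substitutes _ _)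
    (topChoice_sizeMonotonic _ _) (topChoice_consistent _ _) h2c (topChoice_substitutes _ _)
    (topChoice_consistent _ _)

/-- **Proposition 2 (contractions).** If `E` is a contraction, then `L_E`
preserves path independence over responsive choice functions iff `I \ E`
(i.e. `Z ↦ Z \ E(Z)`) is cardinal-linear. -/
theorem lexComp_contraction_preserves_pi_iff_cardinalLinear
    {X : Type*} [Countable X] [Infinite X] (E : Finset X → Set X)
    (hcontr : ∀ Z : Finset X, E Z ⊆ (Z : Set X)) :
    (∀ C1 C2 : Finset X → Finset X, IsChoice C1 → IsChoice C2 →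
        Responsive C1 → Responsive C2 → PathIndependent (lexComp E C1 C2)) ↔
      CardinalLinear (fun Z : Finset X => (Z : Set X) \ E Z) :=
  lexComp_contraction_preserves_pi_iff_cardinalLinear_general E hcontr
end

section
/- Let X be a countably infinite set. The lexicographic composition L_E preserves path independence over C^{sv-res} × C^{pi} (that is, L_E(C1,C2) is path independent whenever C1 is a single-valued responsive choice function and C2 is a path independent choice function) if and only if there exists an exclusion function E' that is threshold-linear with cardinal reuse such that E(∅) = E'(∅) and E({x}) = E'({x}) for every x ∈ X. -/
/-! Common definitions: choice functions on a countably infinite set of items,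
lexicographic composition subject to an exclusion function, and the various
properties from the paper. Items form a type `X`; finite subsets of `X` are
`Finset X`; set functions are maps `Finset X → Set X`. -/

open scoped Classical

variable {X : Type*}

/-! Because `C1` is single-valued, `L_E(C1, C2)` consults `E` only on `∅` and on singletons,
and there threshold-linearity with cardinal reuse says: either every `{x}` excludes all other
items (threshold `t ≤ 1`), or `E ∅ ⊆ E {x} ⊆ E ∅ ∪ {x}` for every `x` (threshold `t ≥ 2`).

In the first case `L_E(C1, C2) = C1` whenever `C1` chooses something, and otherwise it is `C2`
after removing `E ∅`. In the second case, for `U = Y ∪ Y'` the exclusion sets `E (C1 Y)` and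
`E (C1 Y')` agree with `E (C1 U)` on `Y` and `Y'` off the chosen items, which lets path
independence of `C2` pass to the composition.

Conversely, if some `{a}` does not exclude some `b ≠ a`, four small counterexamples, in which
`C1` and `C2` pick by priority among at most two items, force both inclusions for every `x`. -/

namespace PathIndependent

variable {X : Type*} {C : Finset X → Finset X}

theorem apply_apply (h : PathIndependent C) (S : Finset X) : C (C S) = C S := by
  simpa using (h S S).symm

theorem apply_union_apply_right (h : PathIndependent C) (A B : Finset X) :
    C (A ∪ C B) = C (A ∪ B) := by
  rw [h, h.apply_apply, ← h]

theorem apply_union_union_apply (h : PathIndependent C) (A B A' B' : Finset X) :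
    C ((A ∪ C B) ∪ (A' ∪ C B')) = C ((A ∪ B) ∪ (A' ∪ B')) := by
  rw [h, h.apply_union_apply_right A, h.apply_union_apply_right A', ← h]

theorem consistent (h : PathIndependent C) : Consistent C := by
  intro W U hUW hWU
  calc C W = C (W ∪ C U) := by rw [Finset.union_eq_left.mpr hUW]
    _ = C (W ∪ U) := h.apply_union_apply_right W U
    _ = C U := by rw [Finset.union_eq_right.mpr hWU]

theorem apply_union_subset (h : PathIndependent C) (hC : IsChoice C) (Y Y' : Finset X) :
    C (Y ∪ Y') ⊆ C Y ∪ C Y' :=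
  h Y Y' ▸ hC _

theorem mem_of_subset (h : PathIndependent C) (hC : IsChoice C) {U V : Finset X} {x : X}
    (hx : x ∈ C U) (hxV : x ∈ V) (hVU : V ⊆ U) : x ∈ C V := by
  rw [← Finset.union_sdiff_of_subset hVU] at hx
  refine (Finset.mem_union.mp (h.apply_union_subset hC _ _ hx)).resolve_right fun hx' => ?_
  exact (Finset.mem_sdiff.mp (hC _ hx')).2 hxV

theorem eq_empty_of_subset (h : PathIndependent C) {U V : Finset X} (hU : C U = ∅)
    (hVU : V ⊆ U) : C V = ∅ := by
  rw [← hU, ← h.apply_apply V, ← Finset.union_eq_right.mpr hVU, h, hU, Finset.union_empty]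

end PathIndependent

theorem Finset.eq_empty_or_eq_singleton_of_card_le_one {X : Type*} {s : Finset X}
    (h : s.card ≤ 1) : s = ∅ ∨ ∃ x, s = {x} := by
  rcases s.eq_empty_or_nonempty with hs | hs
  · exact Or.inl hs
  · exact Or.inr (Finset.card_eq_one.mp (le_antisymm h hs.card_pos))

theorem Finset.eq_singleton_of_mem_of_card_le_one {X : Type*} {s : Finset X} {x : X}
    (h : s.card ≤ 1) (hx : x ∈ s) : s = {x} :=
  Finset.eq_singleton_iff_unique_mem.mpr ⟨hx, fun y hy => Finset.card_le_one.mp h y hy x hx⟩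

section LexComp

variable {X : Type*} {E : Finset X → Set X} {C1 C2 : Finset X → Finset X}

theorem IsChoice.lexComp (hC1 : IsChoice C1) (hC2 : IsChoice C2) :
    IsChoice (lexComp E C1 C2) :=
  fun Y => Finset.union_subset (hC1 Y) ((hC2 _).trans (Finset.filter_subset _ _))

theorem PathIndependent.apply_lexComp_union (hPI1 : PathIndependent C1) (hC1 : IsChoice C1)
    (hC2 : IsChoice C2) (Y Y' : Finset X) :
    C1 (lexComp E C1 C2 Y ∪ lexComp E C1 C2 Y') = C1 (Y ∪ Y') :=
  hPI1.consistent _ _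
    ((hPI1.apply_union_subset hC1 Y Y').trans
      (Finset.union_subset_union Finset.subset_union_left Finset.subset_union_left))
    (Finset.union_subset_union (hC1.lexComp hC2 Y) (hC1.lexComp hC2 Y'))

def ExclusionCompatible (E : Finset X → Set X) (C1 : Finset X → Finset X) (S : Set X)
    (V : Finset X) : Prop :=
  ∀ y ∈ V, (y ∈ S → y ∈ E (C1 V)) ∧ (y ∈ E (C1 V) → y ∈ C1 V ∨ y ∈ S)

namespace ExclusionCompatible

variable {S : Set X} {V : Finset X}

theorem filter_eq (h : ExclusionCompatible E C1 S V) (hC1 : IsChoice C1) :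
    V.filter (· ∉ S) = (C1 V).filter (· ∉ S) ∪ V.filter (· ∉ E (C1 V)) := by
  ext y
  simp only [Finset.mem_union, Finset.mem_filter]
  constructor
  · rintro ⟨hyV, hyS⟩
    by_cases hy : y ∈ C1 V
    · exact Or.inl ⟨hy, hyS⟩
    · exact Or.inr ⟨hyV, fun hyE => ((h y hyV).2 hyE).elim hy hyS⟩
  · rintro (⟨hy, hyS⟩ | ⟨hyV, hyE⟩)
    · exact ⟨hC1 V hy, hyS⟩
    · exact ⟨hyV, fun hyS => hyE ((h y hyV).1 hyS)⟩

theorem filter_lexComp (h : ExclusionCompatible E C1 S V) (hC2 : IsChoice C2) :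
    (lexComp E C1 C2 V).filter (· ∉ S) =
      (C1 V).filter (· ∉ S) ∪ C2 (V.filter (· ∉ E (C1 V))) := by
  rw [lexComp, Finset.filter_union]
  congr 1
  refine Finset.filter_true_of_mem fun y hy hyS => ?_
  obtain ⟨hyV, hyE⟩ := Finset.mem_filter.mp (hC2 _ hy)
  exact hyE ((h y hyV).1 hyS)

end ExclusionCompatible

theorem lexComp_union_eq_of_compatible (hC1 : IsChoice C1) (hPI1 : PathIndependent C1)
    (hC2 : IsChoice C2) (hPI2 : PathIndependent C2) {Y Y' : Finset X}
    (hY : ExclusionCompatible E C1 (E (C1 (Y ∪ Y'))) Y)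
    (hY' : ExclusionCompatible E C1 (E (C1 (Y ∪ Y'))) Y') :
    lexComp E C1 C2 (Y ∪ Y') = lexComp E C1 C2 (lexComp E C1 C2 Y ∪ lexComp E C1 C2 Y') := by
  conv_rhs => rw [lexComp, hPI1.apply_lexComp_union hC1 hC2, Finset.filter_union,
    hY.filter_lexComp hC2, hY'.filter_lexComp hC2, hPI2.apply_union_union_apply]
  rw [lexComp, Finset.filter_union, hY.filter_eq hC1, hY'.filter_eq hC1]

end LexComp

section Sufficiency

variable {X : Type*} {E : Finset X → Set X} {C1 C2 : Finset X → Finset X}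

theorem pathIndependent_lexComp_of_forall_mem_singleton (hA : ∀ x y : X, y ≠ x → y ∈ E {x})
    (hC1 : IsChoice C1) (hPI1 : PathIndependent C1) (hsv : ∀ Y, (C1 Y).card ≤ 1)
    (hC2 : IsChoice C2) (hPI2 : PathIndependent C2) :
    PathIndependent (lexComp E C1 C2) := by
  have hsingle : ∀ Z M, C1 Z = {M} → lexComp E C1 C2 Z = {M} := by
    intro Z M hZ
    rw [lexComp, hZ, Finset.union_eq_left]
    intro y hy
    by_contra hyM
    exact (Finset.mem_filter.mp (hC2 _ hy)).2 (hA M y (by simpa using hyM))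
  intro Y Y'
  rcases Finset.eq_empty_or_eq_singleton_of_card_le_one (hsv (Y ∪ Y')) with hU | ⟨M, hU⟩
  · have hcompat : ∀ V ⊆ Y ∪ Y', ExclusionCompatible E C1 (E (C1 (Y ∪ Y'))) V := by
      intro V hV y _
      simp [hU, hPI1.eq_empty_of_subset hU hV]
    exact lexComp_union_eq_of_compatible hC1 hPI1 hC2 hPI2
      (hcompat _ Finset.subset_union_left) (hcompat _ Finset.subset_union_right)
  · rw [hsingle _ _ hU, hsingle _ _ ((hPI1.apply_lexComp_union hC1 hC2 Y Y').trans hU)]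

theorem pathIndependent_lexComp_of_sandwich (hB : ∀ x : X, E ∅ ⊆ E {x} ∧ E {x} ⊆ E ∅ ∪ {x})
    (hC1 : IsChoice C1) (hPI1 : PathIndependent C1) (hsv : ∀ Y, (C1 Y).card ≤ 1)
    (hC2 : IsChoice C2) (hPI2 : PathIndependent C2) :
    PathIndependent (lexComp E C1 C2) := by
  have hsand : ∀ V, E ∅ ⊆ E (C1 V) ∧ E (C1 V) ⊆ E ∅ ∪ C1 V := by
    intro V
    rcases Finset.eq_empty_or_eq_singleton_of_card_le_one (hsv V) with h | ⟨x, h⟩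
    · simp [h]
    · simpa [h] using hB x
  intro Y Y'
  have hcompat : ∀ V ⊆ Y ∪ Y', ExclusionCompatible E C1 (E (C1 (Y ∪ Y'))) V := by
    intro V hV y hyV
    refine ⟨fun hyS => ?_, fun hyE => ((hsand V).2 hyE).symm.imp id fun hyK => (hsand _).1 hyK⟩
    rcases (hsand _).2 hyS with hyK | hyU
    · exact (hsand V).1 hyK
    · have hyV' : y ∈ C1 V := hPI1.mem_of_subset hC1 hyU hyV hV
      rwa [Finset.eq_singleton_of_mem_of_card_le_one (hsv V) hyV',
        ← Finset.eq_singleton_of_mem_of_card_le_one (hsv _) hyU]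
  exact lexComp_union_eq_of_compatible hC1 hPI1 hC2 hPI2
    (hcompat _ Finset.subset_union_left) (hcompat _ Finset.subset_union_right)

end Sufficiency

section TopChoice

variable {X : Type*} (r : LinearOrder (Option X))

theorem topChoice_subset (q : ℕ) (Y : Finset X) : topChoice r q Y ⊆ Y :=
  Finset.filter_subset _ _

theorem topChoice_one_eq_empty {Y : Finset X} (h : ∀ z ∈ Y, ¬ r.lt none (some z)) :
    topChoice r 1 Y = ∅ :=
  Finset.filter_false_of_mem fun z hz hacc => h z hz hacc.1

theorem topChoice_one_eq_singleton {Y : Finset X} {m : X} (hm : m ∈ Y)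
    (hacc : r.lt none (some m))
    (hmax : ∀ z ∈ Y, r.lt none (some z) → r.le (some z) (some m)) :
    topChoice r 1 Y = {m} := by
  let := r
  ext y
  simp only [topChoice, Finset.mem_filter, Nat.lt_one_iff, Finset.card_eq_zero,
    Finset.filter_eq_empty_iff, not_and, Finset.mem_singleton]
  constructor
  · rintro ⟨hy, hyacc, hytop⟩
    exact Option.some.inj (le_antisymm (hmax y hy hyacc) (not_lt.mp (hytop hm hacc)))
  · rintro rfl
    exact ⟨hm, hacc, fun z hz hzacc => not_lt.mpr (hmax z hz hzacc)⟩

theorem exists_top_or_forall_not_acceptable (Y : Finset X) :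
    (∀ z ∈ Y, ¬ r.lt none (some z)) ∨
      ∃ m ∈ Y, r.lt none (some m) ∧ ∀ z ∈ Y, r.lt none (some z) → r.le (some z) (some m) := by
  let := r
  rcases (Y.filter fun z => r.lt none (some z)).eq_empty_or_nonempty with h | h
  · exact Or.inl (Finset.filter_eq_empty_iff.mp h)
  · obtain ⟨m, hm, hmax⟩ := (Y.filter fun z => r.lt none (some z)).exists_max_image some h
    rw [Finset.mem_filter] at hm
    exact Or.inr ⟨m, hm.1, hm.2, fun z hz hzacc => hmax z (Finset.mem_filter.mpr ⟨hz, hzacc⟩)⟩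

theorem card_topChoice_one_le (Y : Finset X) : (topChoice r 1 Y).card ≤ 1 := by
  rcases exists_top_or_forall_not_acceptable r Y with h | ⟨m, hm, hacc, hmax⟩
  · simp [topChoice_one_eq_empty r h]
  · simp [topChoice_one_eq_singleton r hm hacc hmax]

theorem pathIndependent_topChoice_one : PathIndependent (topChoice r 1) := by
  intro Y Y'
  have hsub : topChoice r 1 Y ∪ topChoice r 1 Y' ⊆ Y ∪ Y' :=
    Finset.union_subset_union (topChoice_subset r 1 Y) (topChoice_subset r 1 Y')
  rcases exists_top_or_forall_not_acceptable r (Y ∪ Y') with h | ⟨M, hM, hacc, hmax⟩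
  · rw [topChoice_one_eq_empty r h, topChoice_one_eq_empty r fun z hz => h z (hsub hz)]
  · have hM' : M ∈ topChoice r 1 Y ∪ topChoice r 1 Y' := by
      rcases Finset.mem_union.mp hM with hMY | hMY'
      · rw [topChoice_one_eq_singleton r hMY hacc fun z hz => hmax z (Finset.mem_union_left _ hz)]
        simp
      · rw [topChoice_one_eq_singleton r hMY' hacc
          fun z hz => hmax z (Finset.mem_union_right _ hz)]
        simp
    rw [topChoice_one_eq_singleton r hM hacc hmax,
      topChoice_one_eq_singleton r hM' hacc fun z hz => hmax z (hsub hz)]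

end TopChoice

section Priority

variable {X : Type*}

noncomputable def priorityRank (a b : X) : Option X → ℤ
  | none => 0
  | some x => if x = a then 2 else if x = b then 1 else -1

/-- `a` above `b` above the outside option `none`, all other items below it; ties of the rank
are broken by an arbitrary well-order of `Option X`. -/
noncomputable abbrev priorityOrder (a b : X) : LinearOrder (Option X) :=
  letI := IsWellOrder.linearOrder (WellOrderingRel : Option X → Option X → Prop)
  LinearOrder.lift' (fun o => toLex (priorityRank a b o, o))
    fun _ _ h => congrArg Prod.snd (toLex.injective h)

theorem priorityOrder_none_lt_some (a b x : X) :
    (priorityOrder a b).lt none (some x) ↔ x = a ∨ x = b := by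
  let := IsWellOrder.linearOrder (WellOrderingRel : Option X → Option X → Prop)
  change toLex (priorityRank a b none, none) < toLex (priorityRank a b (some x), some x) ↔ _
  rw [Prod.Lex.toLex_lt_toLex]
  simp only [priorityRank]
  split_ifs <;> simp_all

theorem priorityOrder_le (a b : X) : (priorityOrder a b).le (some b) (some a) := by
  let := IsWellOrder.linearOrder (WellOrderingRel : Option X → Option X → Prop)
  change toLex (priorityRank a b (some b), some b) ≤ toLex (priorityRank a b (some a), some a)
  rw [Prod.Lex.toLex_le_toLex]
  simp only [priorityRank]
  split_ifs <;> simp_all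

noncomputable def priorityChoice (a b : X) : Finset X → Finset X :=
  topChoice (priorityOrder a b) 1

theorem priorityChoice_apply (a b : X) (Y : Finset X) :
    priorityChoice a b Y = if a ∈ Y then {a} else if b ∈ Y then {b} else ∅ := by
  have hacc := priorityOrder_none_lt_some a b
  split_ifs with ha hb
  · refine topChoice_one_eq_singleton _ ha ((hacc a).mpr (Or.inl rfl)) fun z _ hz => ?_
    rcases (hacc z).mp hz with rfl | rfl
    · exact (priorityOrder z b).le_refl _
    · exact priorityOrder_le a z
  · refine topChoice_one_eq_singleton _ hb ((hacc b).mpr (Or.inr rfl)) fun z hzY hz => ?_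
    rcases (hacc z).mp hz with rfl | rfl
    · exact absurd hzY ha
    · exact (priorityOrder a z).le_refl _
  · refine topChoice_one_eq_empty _ fun z hzY hz => ?_
    rcases (hacc z).mp hz with rfl | rfl
    · exact ha hzY
    · exact hb hzY

theorem isChoice_priorityChoice (a b : X) : IsChoice (priorityChoice a b) :=
  topChoice_subset _ 1

theorem svResponsive_priorityChoice (a b : X) : SVResponsive (priorityChoice a b) :=
  ⟨priorityOrder a b, fun _ => rfl⟩

theorem pathIndependent_priorityChoice (a b : X) : PathIndependent (priorityChoice a b) :=
  pathIndependent_topChoice_one _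

end Priority

section Necessity

variable {X : Type*} {E : Finset X → Set X}

def LexCompPreservesPI (E : Finset X → Set X) : Prop :=
  ∀ C1 C2 : Finset X → Finset X, IsChoice C1 → IsChoice C2 →
    SVResponsive C1 → PathIndependent C2 → PathIndependent (lexComp E C1 C2)

theorem LexCompPreservesPI.priority (hP : LexCompPreservesPI E) (a b c d : X)
    (Y Y' : Finset X) :
    lexComp E (priorityChoice a b) (priorityChoice c d) (Y ∪ Y') =
      lexComp E (priorityChoice a b) (priorityChoice c d)
        (lexComp E (priorityChoice a b) (priorityChoice c d) Y ∪
          lexComp E (priorityChoice a b) (priorityChoice c d) Y') :=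
  hP _ _ (isChoice_priorityChoice a b) (isChoice_priorityChoice c d)
    (svResponsive_priorityChoice a b) (pathIndependent_priorityChoice c d) Y Y'

theorem LexCompPreservesPI.mem_singleton_of_mem_empty (hP : LexCompPreservesPI E) {m y : X}
    (hym : y ≠ m) (hy : y ∈ E ∅) : y ∈ E {m} := by
  by_contra hyE
  -- `C1` accepts only `m`, `C2` only `y`: `L {y} = ∅` and `L {m} = {m}`, yet `y ∈ L {y, m}`.
  have h := congrArg (y ∈ ·) (hP.priority m m y y {y} {m})
  by_cases hm : m ∈ E {m} <;>
    simp [lexComp, priorityChoice_apply, hym, hym.symm, hy, hyE, hm, Finset.filter_singleton] at h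

theorem LexCompPreservesPI.forall_mem_singleton_of_notMem_empty (hP : LexCompPreservesPI E)
    {m y : X} (hym : y ≠ m) (hy : y ∈ E {m}) (hyK : y ∉ E ∅) :
    ∀ x, x ≠ m → x ∈ E {m} := by
  intro x hxm
  by_cases hxy : x = y
  · exact hxy ▸ hy
  by_contra hx
  -- `C1` accepts only `m`, `C2` prefers `y` to `x`: `L {m} ∪ L {y, x} = {m, y}` is mapped to
  -- `{m}`, yet `x ∈ L {m, y, x}` because `E {m}` removes `y` there.
  have h := congrArg (x ∈ ·) (hP.priority m m y x {m} {y, x})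
  by_cases hm : m ∈ E {m} <;> by_cases hxK : x ∈ E ∅ <;>
    simp [lexComp, priorityChoice_apply, hym, hym.symm, hxm, hxm.symm, Ne.symm hxy, hy,
      hyK, hx, hm, hxK, Finset.filter_singleton, Finset.filter_insert] at h

theorem LexCompPreservesPI.mem_singleton_of_mem_singleton (hP : LexCompPreservesPI E)
    {m m' y : X} (hm'm : m' ≠ m) (hym : y ≠ m) (hym' : y ≠ m') (hy : y ∈ E {m'}) :
    y ∈ E {m} := by
  by_contra hyE
  -- `C1` prefers `m` to `m'`, `C2` accepts only `y`: `L {m} ∪ L {m', y} = {m, m'}` is mapped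
  -- to `{m}`, yet `y ∈ L {m, m', y}`.
  have h := congrArg (y ∈ ·) (hP.priority m m' y y {m} {m', y})
  by_cases hm : m ∈ E {m} <;> by_cases hm' : m' ∈ E {m'} <;> by_cases hm'E : m' ∈ E {m} <;>
    simp [lexComp, priorityChoice_apply, hym, hym.symm, hm'm.symm, hym', hym'.symm, hy,
      hyE, hm, hm', hm'E, Finset.filter_singleton, Finset.filter_insert] at h

theorem LexCompPreservesPI.mem_singleton_self_of_mem_singleton (hP : LexCompPreservesPI E)
    {m m' y : X} (hm'm : m' ≠ m) (hym : y ≠ m) (hym' : y ≠ m') (hm' : m' ∈ E {m})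
    (hy : y ∉ E {m}) : m' ∈ E {m'} := by
  by_contra hm'E
  -- `C1` prefers `m` to `m'`, `C2` prefers `m'` to `y`: `L {m} ∪ L {m', y} = {m, m'}` is mapped
  -- to `{m}`, yet in `L {m, m', y}` the removal of `m'` by `E {m}` lets `C2` pick `y`.
  have h := congrArg (y ∈ ·) (hP.priority m m' m' y {m} {m', y})
  by_cases hm : m ∈ E {m} <;>
    simp [lexComp, priorityChoice_apply, hym, hym.symm, hm'm, hm'm.symm, hym'.symm, hy,
      hm, hm', hm'E, Finset.filter_singleton, Finset.filter_insert] at h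

theorem LexCompPreservesPI.notMem_singleton (hP : LexCompPreservesPI E) {a b : X}
    (hba : b ≠ a) (hb : b ∉ E {a}) {c : X} (hcb : c ≠ b) : b ∉ E {c} := by
  intro hbc
  rcases eq_or_ne c a with rfl | hca
  · exact hb hbc
  · exact hb (hP.mem_singleton_of_mem_singleton hca hba hcb.symm hbc)

theorem LexCompPreservesPI.mem_empty_of_mem_singleton [Infinite X] (hP : LexCompPreservesPI E)
    {a b : X} (hba : b ≠ a) (hb : b ∉ E {a}) {c y : X} (hyc : y ≠ c) (hy : y ∈ E {c}) :
    y ∈ E ∅ := by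
  have hne : ∀ {c}, c ≠ b → y ≠ c → y ∈ E {c} → y ∈ E ∅ := fun hcb hyc hy => by
    by_contra hyK
    exact hP.notMem_singleton hba hb hcb
      (hP.forall_mem_singleton_of_notMem_empty hyc hy hyK b hcb.symm)
  rcases ne_or_eq c b with hcb | rfl
  · exact hne hcb hyc hy
  · obtain ⟨w, hw⟩ := Infinite.exists_notMem_finset ({c, y} : Finset X)
    simp only [Finset.mem_insert, Finset.mem_singleton, not_or] at hw
    exact hne hw.1 (Ne.symm hw.2)
      (hP.mem_singleton_of_mem_singleton (Ne.symm hw.1) (Ne.symm hw.2) hyc hy)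

theorem LexCompPreservesPI.mem_singleton_self_of_mem_empty [Infinite X]
    (hP : LexCompPreservesPI E) {a b : X} (hba : b ≠ a) (hb : b ∉ E {a}) {c : X}
    (hc : c ∈ E ∅) : c ∈ E {c} := by
  have hcb : c ≠ b := fun h => hb (hP.mem_singleton_of_mem_empty hba (h ▸ hc))
  obtain ⟨m, hm⟩ := Infinite.exists_notMem_finset ({b, c} : Finset X)
  simp only [Finset.mem_insert, Finset.mem_singleton, not_or] at hm
  exact hP.mem_singleton_self_of_mem_singleton (Ne.symm hm.2) (Ne.symm hm.1) hcb.symm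
    (hP.mem_singleton_of_mem_empty (Ne.symm hm.2) hc) (hP.notMem_singleton hba hb hm.1)

theorem LexCompPreservesPI.sandwich [Infinite X] (hP : LexCompPreservesPI E) {a b : X}
    (hba : b ≠ a) (hb : b ∉ E {a}) (x : X) : E ∅ ⊆ E {x} ∧ E {x} ⊆ E ∅ ∪ {x} := by
  refine ⟨fun y hy => ?_, fun y hy => ?_⟩
  · rcases eq_or_ne y x with rfl | hyx
    · exact hP.mem_singleton_self_of_mem_empty hba hb hy
    · exact hP.mem_singleton_of_mem_empty hyx hy
  · rcases eq_or_ne y x with rfl | hyx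
    · exact Or.inr rfl
    · exact Or.inl (hP.mem_empty_of_mem_singleton hba hb hyx hy)

end Necessity

section Threshold

variable {X : Type*} {E : Finset X → Set X}

theorem forall_mem_singleton_or_sandwich_of_tlcr {E' : Finset X → Set X} (hE' : TLCR E')
    (h0 : E ∅ = E' ∅) (h1 : ∀ x, E {x} = E' {x}) :
    (∀ x y : X, y ≠ x → y ∈ E {x}) ∨ ∀ x : X, E ∅ ⊆ E {x} ∧ E {x} ⊆ E ∅ ∪ {x} := by
  obtain ⟨t, K, T, hT0, -, -, hZ⟩ := hE'
  by_cases ht : 1 < t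
  · have hK : E ∅ = K := by
      rw [h0, (hZ ∅).1 (by simpa using zero_lt_one.trans ht)]
      simp
    refine Or.inr fun x => ?_
    rw [h1, (hZ {x}).1 (by simpa using ht), hK, Finset.card_singleton, Finset.coe_singleton]
    exact ⟨Set.subset_union_right, Set.union_subset_iff.mpr
      ⟨Set.sdiff_subset.trans Set.subset_union_right, Set.subset_union_left⟩⟩
  · refine Or.inl fun x y hyx => ?_
    have hy : y ∈ E' {x} ∪ (({x} : Finset X) : Set X) :=
      (hZ {x}).2 (by simpa using ht) ▸ Set.mem_univ y
    simpa [h1, hyx] using hy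

def univAboveSingletons (E : Finset X → Set X) (Z : Finset X) : Set X :=
  if Z.card ≤ 1 then E Z else Set.univ

theorem tlcrWith_univAboveSingletons_one (hA : ∀ x y : X, y ≠ x → y ∈ E {x}) :
    TLCRWith (univAboveSingletons E) 1 (E ∅) fun _ => ∅ := by
  refine ⟨rfl, fun _ _ => subset_rfl, fun _ _ => Set.empty_subset _,
    fun Z => ⟨fun hZ => ?_, fun hZ => ?_⟩⟩
  · obtain rfl : Z = ∅ := Finset.card_eq_zero.mp (Nat.lt_one_iff.mp (by exact_mod_cast hZ))
    simp [univAboveSingletons]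
  · have hZ : 1 ≤ Z.card := by exact_mod_cast not_lt.mp hZ
    rcases hZ.eq_or_lt with hZ | hZ
    · obtain ⟨x, rfl⟩ := Finset.card_eq_one.mp hZ.symm
      refine Set.eq_univ_of_forall fun y => ?_
      rcases eq_or_ne y x with rfl | hyx
      · simp
      · simp [univAboveSingletons, hA x y hyx]
    · simp [univAboveSingletons, Nat.not_le.mpr hZ]

theorem tlcrWith_univAboveSingletons_two (hB : ∀ x : X, E ∅ ⊆ E {x} ∧ E {x} ⊆ E ∅ ∪ {x}) :
    TLCRWith (univAboveSingletons E) 2 (E ∅)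
      fun n => if n = 0 then ∅ else {x | x ∉ E {x}} := by
  refine ⟨rfl, fun n _ => ?_, fun n _ => ?_, fun Z => ⟨fun hZ => ?_, fun hZ => ?_⟩⟩
  · dsimp only
    rw [if_neg n.succ_ne_zero]
    split_ifs <;> simp
  · dsimp only
    split_ifs
    · exact Set.empty_subset _
    · exact fun x hx hxK => hx ((hB x).1 hxK)
  · have hZ : Z.card ≤ 1 := Nat.lt_succ_iff.mp (by exact_mod_cast hZ)
    rcases Finset.eq_empty_or_eq_singleton_of_card_le_one hZ with rfl | ⟨x, rfl⟩
    · simp [univAboveSingletons]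
    · ext y
      simp only [univAboveSingletons, Finset.card_singleton, le_refl, if_true, one_ne_zero,
        if_false, Finset.coe_singleton, Set.mem_union, Set.mem_sdiff, Set.mem_singleton_iff,
        Set.mem_ofPred_eq, not_not]
      constructor
      · intro hy
        rcases (hB x).2 hy with hyK | rfl
        · exact Or.inr hyK
        · exact Or.inl ⟨rfl, hy⟩
      · rintro (⟨rfl, hy⟩ | hyK)
        · exact hy
        · exact (hB x).1 hyK
  · have hZ : ¬ Z.card ≤ 1 := fun h => hZ (by exact_mod_cast Nat.lt_succ_of_le h)
    simp [univAboveSingletons, hZ]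

theorem exists_tlcr_agree_iff :
    (∃ E' : Finset X → Set X, TLCR E' ∧ E ∅ = E' ∅ ∧ ∀ x : X, E {x} = E' {x}) ↔
      (∀ x y : X, y ≠ x → y ∈ E {x}) ∨ ∀ x : X, E ∅ ⊆ E {x} ∧ E {x} ⊆ E ∅ ∪ {x} := by
  refine ⟨fun ⟨E', hE', h0, h1⟩ => forall_mem_singleton_or_sandwich_of_tlcr hE' h0 h1,
    fun h => ⟨univAboveSingletons E, ?_, by simp [univAboveSingletons],
      fun x => by simp [univAboveSingletons]⟩⟩
  rcases h with hA | hB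
  · exact ⟨_, _, _, tlcrWith_univAboveSingletons_one hA⟩
  · exact ⟨_, _, _, tlcrWith_univAboveSingletons_two hB⟩

end Threshold

theorem lexComp_preserves_pi_over_svres_pi_iff_general
    {X : Type*} [Infinite X] (E : Finset X → Set X) :
    (∀ C1 C2 : Finset X → Finset X, IsChoice C1 → IsChoice C2 →
        SVResponsive C1 → PathIndependent C2 →
        PathIndependent (lexComp E C1 C2)) ↔
      ∃ E' : Finset X → Set X, TLCR E' ∧
        E ∅ = E' ∅ ∧ ∀ x : X, E {x} = E' {x} := by
  rw [exists_tlcr_agree_iff]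
  constructor
  · intro hP
    refine or_iff_not_imp_left.mpr fun hA => ?_
    push Not at hA
    obtain ⟨a, b, hba, hb⟩ := hA
    exact LexCompPreservesPI.sandwich hP hba hb
  · rintro hAB C1 C2 hC1 hC2 ⟨r, hr⟩ hPI2
    obtain rfl : C1 = topChoice r 1 := funext hr
    rcases hAB with hA | hB
    · exact pathIndependent_lexComp_of_forall_mem_singleton hA hC1
        (pathIndependent_topChoice_one r) (card_topChoice_one_le r) hC2 hPI2
    · exact pathIndependent_lexComp_of_sandwich hB hC1
        (pathIndependent_topChoice_one r) (card_topChoice_one_le r) hC2 hPI2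

/-- **Proposition (sv-res × pi).** `L_E` preserves path independence over
`C^{sv-res} × C^{pi}` iff, on the empty set and all singletons, `E` coincides
with some exclusion function that is threshold-linear with cardinal reuse. -/
theorem lexComp_preserves_pi_over_svres_pi_iff
    {X : Type*} [Countable X] [Infinite X] (E : Finset X → Set X) :
    (∀ C1 C2 : Finset X → Finset X, IsChoice C1 → IsChoice C2 →
        SVResponsive C1 → PathIndependent C2 →
        PathIndependent (lexComp E C1 C2)) ↔
      ∃ E' : Finset X → Set X, TLCR E' ∧
        E ∅ = E' ∅ ∧ ∀ x : X, E {x} = E' {x} :=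
  lexComp_preserves_pi_over_svres_pi_iff_general E
end

section
/- Let X be a countably infinite set with an equivalence relation ~ having countably many classes. Suppose the exclusion function E is equivalence-excluding and many-to-one threshold-linear with cardinal reuse with parameters t, K, and {T^s}, and let Ē be the (ordinary) threshold-linear with cardinal reuse exclusion function with the same parameters. If C1, C2 are many-to-one choice functions, C̄1 completes C1, C̄2 completes C2, and in addition C̄2 satisfies consistency, then the lexicographic composition L_Ē(C̄1, C̄2) completes L_E(C1, C2). -/
/-! Common definitions: choice functions on a countably infinite set of items,
lexicographic composition subject to an exclusion function, and the various
properties from the paper. Items form a type `X`; finite subsets of `X` are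
`Finset X`; set functions are maps `Finset X → Set X`. -/

open scoped Classical

variable {X : Type*}

/-- **Lemma (mto1 completion).** Suppose `E` is equivalence-excluding and
many-to-one threshold-linear with cardinal reuse with parameters `t, K, {T^s}`,
and `Ē` is (ordinary) threshold-linear with cardinal reuse with the same
parameters. If `C̄1` completes `C1`, `C̄2` completes `C2`, and `C̄2` is
consistent, then `L_Ē(C̄1, C̄2)` completes `L_E(C1, C2)`. -/
theorem lexComp_completion
    {X : Type*} [Countable X] [Infinite X] (s : Setoid X)
    [Countable (Quotient s)]
    (E Ebar : Finset X → Set X) (t : ℕ∞) (K : Set X) (T : ℕ → Set X)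
    (hEE : EquivExcluding s E) (hE : MtoTLCRWith s E t K T)
    (hEbar : TLCRWith Ebar t K T)
    (C1 C2 Cbar1 Cbar2 : Finset X → Finset X)
    (hC1 : IsChoice C1) (hC2 : IsChoice C2)
    (hCbar1 : IsChoice Cbar1) (hCbar2 : IsChoice Cbar2)
    (hm1 : ManyToOne s C1) (hm2 : ManyToOne s C2)
    (hcomp1 : Completes s Cbar1 C1) (hcomp2 : Completes s Cbar2 C2)
    (hcons : Consistent Cbar2) :
    Completes s (lexComp Ebar Cbar1 Cbar2) (lexComp E C1 C2) := by
  intro Y hfeas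
  have hfeas1 : Feasible s (Cbar1 Y) := fun x hx z hz hne =>
    hfeas x (Finset.mem_union_left _ hx) z (Finset.mem_union_left _ hz) hne
  have h1 : Cbar1 Y = C1 Y := hcomp1 Y hfeas1
  have hfZ : Feasible s (C1 Y) := h1 ▸ hfeas1
  obtain ⟨-, -, -, hEbar4⟩ := hEbar
  obtain ⟨-, -, -, hE4⟩ := hE
  have hEbarZ := hEbar4 (C1 Y)
  have hEZ := hE4 (C1 Y) hfZ
  simp only [lexComp, h1] at hfeas ⊢
  by_cases hc : ((C1 Y : Set X) ∪ K ≠ Set.univ ∧ ((C1 Y).card : ℕ∞) < t)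
  · have he : Ebar (C1 Y) = E (C1 Y) := by rw [hEbarZ.1 hc.2, hEZ.1 hc]
    rw [he] at hfeas ⊢
    congr 1
    apply hcomp2
    exact fun x hx z hz hne =>
      hfeas x (Finset.mem_union_right _ hx) z (Finset.mem_union_right _ hz) hne
  · have hu : E (C1 Y) ∪ (C1 Y : Set X) = Set.univ := hEZ.2 hc
    have hub : Ebar (C1 Y) ∪ (C1 Y : Set X) = Set.univ := by
      by_cases ht : (((C1 Y).card : ℕ∞) < t)
      · have hK : (C1 Y : Set X) ∪ K = Set.univ := by
          by_contra h; exact hc ⟨h, ht⟩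
        rw [hEbarZ.1 ht]
        rw [Set.eq_univ_iff_forall] at hK ⊢
        intro x
        rcases hK x with h | h
        · exact Or.inr h
        · exact Or.inl (Or.inr h)
      · exact hEbarZ.2 ht
    have hsub1 : Cbar2 (Y.filter fun y => y ∉ Ebar (C1 Y)) ⊆ C1 Y := by
      intro x hx
      have hx' := hCbar2 _ hx
      rw [Finset.mem_filter] at hx'
      have hxu : x ∈ Ebar (C1 Y) ∪ (C1 Y : Set X) := hub ▸ Set.mem_univ x
      rcases hxu with h | h
      · exact absurd h hx'.2
      · exact h
    have hsub2 : C2 (Y.filter fun y => y ∉ E (C1 Y)) ⊆ C1 Y := by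
      intro x hx
      have hx' := hC2 _ hx
      rw [Finset.mem_filter] at hx'
      have hxu : x ∈ E (C1 Y) ∪ (C1 Y : Set X) := hu ▸ Set.mem_univ x
      rcases hxu with h | h
      · exact absurd h hx'.2
      · exact h
    rw [Finset.union_eq_left.mpr hsub1, Finset.union_eq_left.mpr hsub2]
end

section
/- Let X be a countably infinite set with an equivalence relation ~ having countably many classes. The lexicographic composition L_E preserves many-to-oneness over the class C^{mto1} of many-to-one choice functions (i.e., L_E(C1,C2) is many-to-one for all many-to-one C1, C2) if and only if E is equivalence-excluding. -/
/-! Common definitions: choice functions on a countably infinite set of items,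
lexicographic composition subject to an exclusion function, and the various
properties from the paper. Items form a type `X`; finite subsets of `X` are
`Finset X`; set functions are maps `Finset X → Set X`. -/

open scoped Classical

variable {X : Type*}

/-- **Remark (many-to-oneness).** `L_E` preserves many-to-oneness over the
class of many-to-one choice functions iff `E` is equivalence-excluding. -/
theorem lexComp_preserves_manyToOne_iff_equivExcluding
    {X : Type*} [Countable X] [Infinite X] (s : Setoid X)
    [Countable (Quotient s)] (E : Finset X → Set X) :
    (∀ C1 C2 : Finset X → Finset X, IsChoice C1 → IsChoice C2 →
        ManyToOne s C1 → ManyToOne s C2 →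
        ManyToOne s (lexComp E C1 C2)) ↔
      EquivExcluding s E := by
  constructor
  · -- preservation implies equivalence-excluding
    intro h Z hZ y hy
    by_contra hout
    obtain ⟨x₀, hx₀Z, hyx₀⟩ := hy
    simp only [Set.mem_union, Finset.mem_coe, not_or] at hout
    obtain ⟨hyZ, hyE⟩ := hout
    set C1 : Finset X → Finset X := fun Y => Y.filter (· ∈ Z) with hC1def
    set C2 : Finset X → Finset X := fun Y => Y.filter (· = y) with hC2def
    have hc1 : IsChoice C1 := fun Y => Finset.filter_subset _ _
    have hc2 : IsChoice C2 := fun Y => Finset.filter_subset _ _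
    have hm1 : ManyToOne s C1 := by
      intro Y a ha b hb hne
      simp only [hC1def, Finset.mem_filter] at ha hb
      exact hZ a ha.2 b hb.2 hne
    have hm2 : ManyToOne s C2 := by
      intro Y a ha b hb hne
      simp only [hC2def, Finset.mem_filter] at ha hb
      exact absurd (ha.2.trans hb.2.symm) hne
    have hL := h C1 C2 hc1 hc2 hm1 hm2 (Z ∪ {y})
    have hC1eq : C1 (Z ∪ {y}) = Z := by
      ext a
      simp only [hC1def, Finset.mem_filter, Finset.mem_union, Finset.mem_singleton]
      constructor
      · exact fun ha => ha.2
      · exact fun ha => ⟨Or.inl ha, ha⟩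
    have hyL : y ∈ lexComp E C1 C2 (Z ∪ {y}) := by
      unfold lexComp
      rw [hC1eq]
      apply Finset.mem_union_right
      simp only [hC2def, Finset.mem_filter, Finset.mem_union, Finset.mem_singleton]
      exact ⟨⟨by simp, hyE⟩, trivial⟩
    have hx₀L : x₀ ∈ lexComp E C1 C2 (Z ∪ {y}) := by
      unfold lexComp
      rw [hC1eq]
      exact Finset.mem_union_left _ hx₀Z
    have hne : y ≠ x₀ := fun hcon => hyZ (hcon ▸ hx₀Z)
    exact hL y hyL x₀ hx₀L hne hyx₀
  · -- equivalence-excluding implies preservation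
    intro hE C1 C2 hc1 hc2 hm1 hm2 Y a ha b hb hne hab
    have hfeas := hm1 Y
    have key : ∀ u v : X, u ∈ C1 Y →
        v ∈ C2 (Y.filter (fun w => w ∉ E (C1 Y))) → u ≠ v → ¬ s.r u v := by
      intro u v hu hv huv hruv
      have hvY := hc2 _ hv
      simp only [Finset.mem_filter] at hvY
      have hvI : v ∈ IClass s (C1 Y) := ⟨u, hu, s.symm hruv⟩
      have := hE (C1 Y) hfeas hvI
      rcases this with hvC1 | hvE
      · exact hfeas u hu v hvC1 huv hruv
      · exact hvY.2 hvE
    simp only [lexComp, Finset.mem_union] at ha hb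
    rcases ha with ha | ha <;> rcases hb with hb | hb
    · exact hfeas a ha b hb hne hab
    · exact key a b ha hb hne hab
    · exact key b a hb ha hne.symm (s.symm hab)
    · exact hm2 _ a ha b hb hne hab
end

section
/- Let X be a countably infinite set. For every set function E, the lexicographic composition L_E preserves consistency over the class C^{con} of consistent choice functions: if C1 and C2 are consistent choice functions, then L_E(C1,C2) is consistent. -/
/-! Common definitions: choice functions on a countably infinite set of items,
lexicographic composition subject to an exclusion function, and the various
properties from the paper. Items form a type `X`; finite subsets of `X` are
`Finset X`; set functions are maps `Finset X → Set X`. -/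

open scoped Classical

variable {X : Type*}

/-- **Remark (consistency).** For every set function `E`, the lexicographic
composition `L_E` preserves consistency over consistent choice functions. -/
theorem lexComp_preserves_consistency
    {X : Type*} [Countable X] [Infinite X] (E : Finset X → Set X)
    (C1 C2 : Finset X → Finset X) (h1 : IsChoice C1) (h2 : IsChoice C2)
    (hc1 : Consistent C1) (hc2 : Consistent C2) :
    Consistent (lexComp E C1 C2) := by
  intro Y Y' hsub hYY'
  simp only [lexComp] at hsub ⊢
  have hC1' : C1 Y' ⊆ Y := fun x hx => hsub (Finset.mem_union_left _ hx)
  have hC1 : C1 Y = C1 Y' := hc1 Y Y' hC1' hYY'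
  set F := Y.filter (fun y => y ∉ E (C1 Y)) with hF
  set F' := Y'.filter (fun y => y ∉ E (C1 Y')) with hF'
  have hFF' : F ⊆ F' := by
    intro x hx
    rw [hF, Finset.mem_filter] at hx
    rw [hF', Finset.mem_filter, ← hC1]
    exact ⟨hYY' hx.1, hx.2⟩
  have hC2' : C2 F' ⊆ F := by
    intro x hx
    have hxY : x ∈ Y := hsub (Finset.mem_union_right _ hx)
    have := h2 F' hx
    rw [hF', Finset.mem_filter] at this
    rw [hF, Finset.mem_filter, hC1]
    exact ⟨hxY, this.2⟩
  have hC2 : C2 F = C2 F' := hc2 F F' hC2' hFF'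
  rw [hC1, hC2]
end

section
/- Let X be a countably infinite set and let E be a dilation (E(Z) ⊇ Z for every finite Z ⊆ X). If the lexicographic composition L_E preserves path independence over the class C^res of responsive choice functions, then E is monotonic: Z ⊆ Z' implies E(Z) ⊆ E(Z') for all finite Z, Z' ⊆ X. -/
/-! Common definitions: choice functions on a countably infinite set of items,
lexicographic composition subject to an exclusion function, and the various
properties from the paper. Items form a type `X`; finite subsets of `X` are
`Finset X`; set functions are maps `Finset X → Set X`. -/

open scoped Classical

variable {X : Type*}

/-!
Suppose `x ∈ E Z` but `x ∉ E Z'` for some `Z ⊆ Z'`; as `E` is a dilation, `x ∉ Z'`. Let `C1` choose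
the members of `Z'` and `C2` choose `x`, both responsive, and write `L = L_E(C1, C2)`. Then `x` is
excluded from `L (Z ∪ {x}) = Z` but not from `L (Z' ∪ {x}) = Z' ∪ {x}`, while `L Z' = Z'`. Path
independence gives `L (Z' ∪ {x}) = L (L (Z ∪ {x}) ∪ L Z') = L Z' = Z'`, which does not contain `x`.
-/

/-- Rank by acceptability first, break ties by a well-order of `X`, and put `∅` lowest among the
acceptable options. -/
lemma exists_linearOrder_acceptable_iff {X : Type*} (A : Finset X) :
    ∃ r : LinearOrder (Option X), ∀ y : X, r.lt none (some y) ↔ y ∈ A := by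
  let _ : LinearOrder X := linearOrderOfSTO WellOrderingRel
  let g : Option X → Lex (Bool × WithBot X) := fun o => toLex (o.elim true (· ∈ A), o)
  have hg : Function.Injective g := fun a b hab => congrArg (fun p => (ofLex p).2) hab
  refine ⟨LinearOrder.lift' g hg, fun y => ?_⟩
  change g none < g (some y) ↔ y ∈ A
  by_cases hy : y ∈ A
  · simp only [g, hy, Option.elim_none, Option.elim_some, decide_true, Prod.Lex.toLex_lt_toLex,
      lt_self_iff_false, false_or, true_and, iff_true]
    exact WithBot.bot_lt_coe y
  · simp [g, hy, Prod.Lex.toLex_lt_toLex]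

lemma topChoice_eq_inter_of_card_le {X : Type*} (r : LinearOrder (Option X)) (A : Finset X)
    (hr : ∀ y : X, r.lt none (some y) ↔ y ∈ A) {q : ℕ} (hq : A.card ≤ q) (Y : Finset X) :
    topChoice r q Y = Y ∩ A := by
  let _ := r
  rw [← Finset.filter_mem_eq_inter]
  refine Finset.filter_congr fun y _ => ⟨fun h => (hr y).1 h.1, fun hyA => ⟨(hr y).2 hyA, ?_⟩⟩
  have hsub : Y.filter (fun z => none < some z ∧ some y < some z) ⊆ A.erase y := fun z hz => by
    rw [Finset.mem_filter] at hz
    exact Finset.mem_erase.2 ⟨fun hzy => lt_irrefl (some y) (hzy ▸ hz.2.2), (hr z).1 hz.2.1⟩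
  calc (Y.filter (fun z => none < some z ∧ some y < some z)).card
      ≤ (A.erase y).card := Finset.card_le_card hsub
    _ < A.card := Finset.card_erase_lt_of_mem hyA
    _ ≤ q := hq

lemma responsive_inter {X : Type*} (A : Finset X) : Responsive (· ∩ A) := by
  obtain ⟨r, hr⟩ := exists_linearOrder_acceptable_iff A
  exact ⟨r, A.card, fun Y => (topChoice_eq_inter_of_card_le r A hr le_rfl Y).symm⟩

lemma isChoice_inter {X : Type*} (A : Finset X) : IsChoice (· ∩ A) :=
  fun _ => Finset.inter_subset_left

theorem dilation_preserving_pi_monotonic_general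
    {X : Type*} (E : Finset X → Set X)
    (hdil : ∀ Z : Finset X, (Z : Set X) ⊆ E Z)
    (hpres : ∀ C1 C2 : Finset X → Finset X, IsChoice C1 → IsChoice C2 →
      Responsive C1 → Responsive C2 → PathIndependent (lexComp E C1 C2)) :
    ∀ Z Z' : Finset X, Z ⊆ Z' → E Z ⊆ E Z' := by
  intro Z Z' hZZ' x hxZ
  by_contra hxZ'
  have hx : x ∉ Z' := fun h => hxZ' (hdil Z' h)
  set L := lexComp E (· ∩ Z') (· ∩ {x})
  have hL_small : L (insert x Z) = Z := by
    have : insert x Z ∩ Z' = Z := by grind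
    ext y; simp only [L, lexComp, this]; grind
  have hL_Z' : L Z' = Z' := by
    ext y; simp only [L, lexComp, Finset.inter_self]; grind
  have hL_big : L (insert x Z') = insert x Z' := by
    have : insert x Z' ∩ Z' = Z' := by grind
    ext y; simp only [L, lexComp, this]; grind
  have hpi : L (insert x Z ∪ Z') = L (L (insert x Z) ∪ L Z') :=
    hpres _ _ (isChoice_inter Z') (isChoice_inter {x}) (responsive_inter Z')
      (responsive_inter {x}) (insert x Z) Z'
  rw [hL_small, hL_Z', Finset.union_eq_right.2 hZZ', hL_Z', Finset.insert_union,
    Finset.union_eq_right.2 hZZ', hL_big] at hpi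
  exact hx (hpi ▸ Finset.mem_insert_self x Z')

/-- **Claim (dilations are monotonic).** If `E` is a dilation and `L_E`
preserves path independence over responsive choice functions, then `E` is
monotonic. -/
theorem dilation_preserving_pi_monotonic
    {X : Type*} [Countable X] [Infinite X] (E : Finset X → Set X)
    (hdil : ∀ Z : Finset X, (Z : Set X) ⊆ E Z)
    (hpres : ∀ C1 C2 : Finset X → Finset X, IsChoice C1 → IsChoice C2 →
      Responsive C1 → Responsive C2 → PathIndependent (lexComp E C1 C2)) :
    ∀ Z Z' : Finset X, Z ⊆ Z' → E Z ⊆ E Z' :=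
  dilation_preserving_pi_monotonic_general E hdil hpres
end

section
/- Let X be a countably infinite set and let E be a dilation (E(Z) ⊇ Z for every finite Z ⊆ X). If the lexicographic composition L_E preserves path independence over the class C^res of responsive choice functions, then E is all-or-nothing: for every finite Z ⊆ X, E(Z) ∈ {Z ∪ E(∅), X}. -/
/-! Common definitions: choice functions on a countably infinite set of items,
lexicographic composition subject to an exclusion function, and the various
properties from the paper. Items form a type `X`; finite subsets of `X` are
`Finset X`; set functions are maps `Finset X → Set X`. -/

open scoped Classical

variable {X : Type*}

section MyAux
variable {X : Type*}

/-- rank function putting `Z` above `none` and everything else below. -/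
noncomputable def myF1 (g : X → ℕ) (Z : Finset X) : Option X → ℤ
  | none => 0
  | some x => if x ∈ Z then (g x : ℤ) + 1 else -((g x : ℤ) + 1)

lemma myF1_pos_iff (g : X → ℕ) (Z : Finset X) (x : X) :
    0 < myF1 g Z (some x) ↔ x ∈ Z := by
  by_cases h : x ∈ Z
  · simp only [myF1, h, if_true, iff_true]; positivity
  · simp only [myF1, h, if_false, iff_false]; omega

lemma myF1_inj (g : X → ℕ) (hg : Function.Injective g) (Z : Finset X) :
    Function.Injective (myF1 g Z) := by
  intro x y hxy
  match x, y with
  | none, none => rfl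
  | none, some y =>
      exfalso; simp only [myF1] at hxy; split_ifs at hxy <;> omega
  | some x, none =>
      exfalso; simp only [myF1] at hxy; split_ifs at hxy <;> omega
  | some x, some y =>
      simp only [myF1] at hxy
      split_ifs at hxy <;> [skip; omega; omega; skip] <;>
        exact congrArg some (hg (by omega))

noncomputable def myR1 (g : X → ℕ) (hg : Function.Injective g) (Z : Finset X) :
    LinearOrder (Option X) :=
  LinearOrder.lift' (myF1 g Z) (myF1_inj g hg Z)

lemma myR1_lt (g : X → ℕ) (hg : Function.Injective g) (Z : Finset X) (x y : Option X) :
    (myR1 g hg Z).lt x y ↔ myF1 g Z x < myF1 g Z y := Iff.rfl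

lemma topChoice_myR1 (g : X → ℕ) (hg : Function.Injective g) (Z Y : Finset X) :
    topChoice (myR1 g hg Z) Z.card Y = Y.filter (· ∈ Z) := by
  ext y
  simp only [topChoice, Finset.mem_filter, myR1_lt]
  have hnone : myF1 g Z none = 0 := rfl
  constructor
  · rintro ⟨hY, h1, -⟩
    exact ⟨hY, (myF1_pos_iff g Z y).1 (by rw [hnone] at h1; exact h1)⟩
  · rintro ⟨hY, hZ⟩
    refine ⟨hY, by rw [hnone]; exact (myF1_pos_iff g Z y).2 hZ, ?_⟩
    have hsub : (Y.filter (fun z => (myR1 g hg Z).lt none (some z) ∧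
        (myR1 g hg Z).lt (some y) (some z))) ⊆ Z.erase y := by
      intro z hz
      simp only [Finset.mem_filter, myR1_lt, hnone] at hz
      obtain ⟨-, h1, h2⟩ := hz
      refine Finset.mem_erase.2 ⟨?_, (myF1_pos_iff g Z z).1 h1⟩
      rintro rfl; omega
    calc (Y.filter _).card ≤ (Z.erase y).card := Finset.card_le_card hsub
      _ < Z.card := Finset.card_erase_lt_of_mem hZ
/-- rank function with `b ≻ c ≻ none ≻` everything else. -/
noncomputable def myF2 (g : X → ℕ) (b c : X) : Option X → ℤ
  | none => 0
  | some x => if x = b then 2 else if x = c then 1 else -((g x : ℤ) + 1)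

lemma myF2_none (g : X → ℕ) (b c : X) : myF2 g b c none = 0 := rfl

lemma myF2_b (g : X → ℕ) (b c : X) : myF2 g b c (some b) = 2 := by simp [myF2]

lemma myF2_c (g : X → ℕ) (b c : X) (hbc : b ≠ c) : myF2 g b c (some c) = 1 := by
  simp [myF2, hbc.symm]

lemma myF2_pos_iff (g : X → ℕ) (b c : X) (x : X) :
    0 < myF2 g b c (some x) ↔ x = b ∨ x = c := by
  by_cases hb : x = b
  · subst hb; simp [myF2]
  · by_cases hc : x = c
    · have hcb : ¬ c = b := fun h => hb (hc.trans h)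
      simp [myF2, hb, hc, hcb]
    · simp [myF2, hb, hc] <;> omega

lemma myF2_inj (g : X → ℕ) (hg : Function.Injective g) (b c : X) :
    Function.Injective (myF2 g b c) := by
  have hval : ∀ x : X, myF2 g b c (some x) = 2 ∨ myF2 g b c (some x) = 1 ∨
      myF2 g b c (some x) = -((g x : ℤ) + 1) := by
    intro x; simp only [myF2]; split_ifs <;> simp
  intro x y hxy
  match x, y with
  | none, none => rfl
  | none, some y =>
      exfalso; rw [myF2_none] at hxy
      rcases hval y with h | h | h <;> omega
  | some x, none =>
      exfalso; rw [myF2_none] at hxy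
      rcases hval x with h | h | h <;> omega
  | some x, some y =>
      congr 1
      simp only [myF2] at hxy
      split_ifs at hxy with h1 h2 h3 h4 h5 h6 h7 h8 <;>
        first
          | (subst_vars; rfl)
          | omega
          | exact hg (by omega)

noncomputable def myR2 (g : X → ℕ) (hg : Function.Injective g) (b c : X) :
    LinearOrder (Option X) :=
  LinearOrder.lift' (myF2 g b c) (myF2_inj g hg b c)

lemma myR2_lt (g : X → ℕ) (hg : Function.Injective g) (b c : X) (x y : Option X) :
    (myR2 g hg b c).lt x y ↔ myF2 g b c x < myF2 g b c y := Iff.rfl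

lemma mem_topChoice_myR2 (g : X → ℕ) (hg : Function.Injective g) {b c : X}
    (hbc : b ≠ c) (Y : Finset X) (y : X) :
    y ∈ topChoice (myR2 g hg b c) 1 Y ↔ y ∈ Y ∧ (y = b ∨ (y = c ∧ b ∉ Y)) := by
  simp only [topChoice, Finset.mem_filter, myR2_lt, myF2_none]
  constructor
  · rintro ⟨hY, hpos, hcard⟩
    rcases (myF2_pos_iff g b c y).1 hpos with h | h
    · exact ⟨hY, Or.inl h⟩
    · refine ⟨hY, Or.inr ⟨h, fun hbY => ?_⟩⟩
      have h0 := Finset.card_eq_zero.1 (Nat.lt_one_iff.1 hcard)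
      refine Finset.eq_empty_iff_forall_notMem.1 h0 b (Finset.mem_filter.2 ⟨hbY, ?_, ?_⟩)
      · rw [myF2_b]; norm_num
      · rw [myF2_b, h, myF2_c g b c hbc]; norm_num
  · rintro ⟨hY, hy⟩
    have hpos : 0 < myF2 g b c (some y) := (myF2_pos_iff g b c y).2 (by tauto)
    refine ⟨hY, hpos, ?_⟩
    rw [Nat.lt_one_iff, Finset.card_eq_zero, Finset.eq_empty_iff_forall_notMem]
    intro z hz
    rw [Finset.mem_filter] at hz
    obtain ⟨hzY, h1, h2⟩ := hz
    rcases (myF2_pos_iff g b c z).1 h1 with h | h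
    · -- z = b
      rcases hy with hyb | ⟨hyc, hbY⟩
      · rw [hyb, myF2_b, h, myF2_b] at h2; omega
      · exact hbY (h ▸ hzY)
    · -- z = c
      rcases hy with hyb | ⟨hyc, hbY⟩
      · rw [hyb, myF2_b, h, myF2_c g b c hbc] at h2; omega
      · rw [hyc, myF2_c g b c hbc, h, myF2_c g b c hbc] at h2; omega

end MyAux


/-- **Claim (dilations are all-or-nothing).** If `E` is a dilation and `L_E`
preserves path independence over responsive choice functions, then `E` is
all-or-nothing: `E(Z) ∈ {Z ∪ E(∅), X}` for every finite `Z`. -/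
theorem dilation_preserving_pi_allOrNothing
    {X : Type*} [Countable X] [Infinite X] (E : Finset X → Set X)
    (hdil : ∀ Z : Finset X, (Z : Set X) ⊆ E Z)
    (hpres : ∀ C1 C2 : Finset X → Finset X, IsChoice C1 → IsChoice C2 →
      Responsive C1 → Responsive C2 → PathIndependent (lexComp E C1 C2)) :
    ∀ Z : Finset X, E Z = (Z : Set X) ∪ E ∅ ∨ E Z = Set.univ := by
  obtain ⟨g, hg⟩ := exists_injective_nat X
  intro Z
  set C1 := topChoice (myR1 g hg Z) Z.card with hC1def
  have hC1 : ∀ Y, C1 Y = Y.filter (· ∈ Z) := topChoice_myR1 g hg Z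
  have hC1choice : IsChoice C1 := fun Y => Finset.filter_subset _ _
  have hC1res : Responsive C1 := ⟨myR1 g hg Z, Z.card, fun Y => rfl⟩
  have hC1Z : C1 Z = Z := by rw [hC1]; exact Finset.filter_true_of_mem fun _ h => h
  by_cases hA : ∃ a, a ∈ E ∅ ∧ a ∉ E Z
  · exfalso
    obtain ⟨a, haE, haEZ⟩ := hA
    have haZ : a ∉ Z := fun h => haEZ (hdil Z (Finset.mem_coe.2 h))
    set C2 := topChoice (myR1 g hg {a}) 1 with hC2def
    have hC2 : ∀ Y, C2 Y = Y.filter (· ∈ ({a} : Finset X)) := by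
      intro Y
      have := topChoice_myR1 g hg {a} Y
      rwa [Finset.card_singleton] at this
    have hC2choice : IsChoice C2 := fun Y => Finset.filter_subset _ _
    have hC2res : Responsive C2 := ⟨myR1 g hg {a}, 1, fun Y => rfl⟩
    have hPI := hpres C1 C2 hC1choice hC2choice hC1res hC2res Z {a}
    have hC2e : C2 ∅ = ∅ := by rw [hC2]; exact Finset.filter_empty _
    have eZ : lexComp E C1 C2 Z = Z := by
      show C1 Z ∪ C2 (Z.filter fun y => y ∉ E (C1 Z)) = Z
      rw [hC1Z]
      have h1 : (Z.filter fun y => y ∉ E Z) = ∅ :=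
        Finset.filter_false_of_mem fun y hy hne => hne (hdil Z (Finset.mem_coe.2 hy))
      rw [h1, hC2e, Finset.union_empty]
    have ea : lexComp E C1 C2 {a} = ∅ := by
      show C1 {a} ∪ C2 (({a} : Finset X).filter fun y => y ∉ E (C1 {a})) = ∅
      have h1 : C1 {a} = ∅ := by
        rw [hC1]
        refine Finset.filter_false_of_mem fun x hx => ?_
        rw [Finset.mem_singleton] at hx
        subst hx; exact haZ
      rw [h1]
      have h2 : (({a} : Finset X).filter fun y => y ∉ E (∅ : Finset X)) = ∅ := by
        refine Finset.filter_false_of_mem fun x hx hne => ?_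
        rw [Finset.mem_singleton] at hx
        subst hx; exact hne haE
      rw [h2, hC2e, Finset.union_empty]
    have eZa : lexComp E C1 C2 (Z ∪ {a}) = Z ∪ {a} := by
      show C1 (Z ∪ {a}) ∪ C2 ((Z ∪ {a}).filter fun y => y ∉ E (C1 (Z ∪ {a}))) = Z ∪ {a}
      have h1 : C1 (Z ∪ {a}) = Z := by
        rw [hC1]
        ext y
        simp only [Finset.mem_filter, Finset.mem_union, Finset.mem_singleton]
        tauto
      rw [h1]
      have h2 : ((Z ∪ {a}).filter fun y => y ∉ E Z) = {a} := by
        ext y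
        simp only [Finset.mem_filter, Finset.mem_union, Finset.mem_singleton]
        constructor
        · rintro ⟨hy | hy, hne⟩
          · exact absurd (hdil Z (Finset.mem_coe.2 hy)) hne
          · exact hy
        · intro hy; subst hy; exact ⟨Or.inr rfl, haEZ⟩
      rw [h2]
      have h3 : C2 {a} = {a} := by rw [hC2]; exact Finset.filter_true_of_mem fun x hx => hx
      rw [h3]
    rw [eZa, eZ, ea, Finset.union_empty, eZ] at hPI
    have : a ∈ Z := by
      have h := Finset.mem_union_right Z (Finset.mem_singleton_self a)
      rwa [hPI] at h
    exact haZ this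
  · push_neg at hA
    by_cases hU : E Z = Set.univ
    · exact Or.inr hU
    left
    by_contra hne
    obtain ⟨c, hc⟩ := (Set.ne_univ_iff_exists_notMem _).1 hU
    have hsub : (Z : Set X) ∪ E ∅ ⊆ E Z := Set.union_subset (hdil Z) hA
    have hss : (Z : Set X) ∪ E ∅ ⊂ E Z :=
      hsub.ssubset_of_ne (fun h => hne h.symm)
    obtain ⟨b, hbE, hbn⟩ := Set.exists_of_ssubset hss
    rw [Set.mem_union, not_or] at hbn
    have hbZ : b ∉ Z := fun h => hbn.1 (Finset.mem_coe.2 h)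
    have hbE0 : b ∉ E ∅ := hbn.2
    have hcZ : c ∉ Z := fun h => hc (hdil Z (Finset.mem_coe.2 h))
    have hcE0 : c ∉ E ∅ := fun h => hc (hA c h)
    have hbc : b ≠ c := fun h => hc (h ▸ hbE)
    set C2 := topChoice (myR2 g hg b c) 1 with hC2def
    have hC2mem : ∀ Y y, y ∈ C2 Y ↔ y ∈ Y ∧ (y = b ∨ (y = c ∧ b ∉ Y)) :=
      fun Y y => mem_topChoice_myR2 g hg hbc Y y
    have hC2choice : IsChoice C2 := fun Y => Finset.filter_subset _ _
    have hC2res : Responsive C2 := ⟨myR2 g hg b c, 1, fun Y => rfl⟩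
    have hPI := hpres C1 C2 hC1choice hC2choice hC1res hC2res Z {b, c}
    have hC2e : C2 ∅ = ∅ := by
      ext y; rw [hC2mem]; simp
    have eZ : lexComp E C1 C2 Z = Z := by
      show C1 Z ∪ C2 (Z.filter fun y => y ∉ E (C1 Z)) = Z
      rw [hC1Z]
      have h1 : (Z.filter fun y => y ∉ E Z) = ∅ :=
        Finset.filter_false_of_mem fun y hy hne => hne (hdil Z (Finset.mem_coe.2 hy))
      rw [h1, hC2e, Finset.union_empty]
    have ebc : lexComp E C1 C2 {b, c} = {b} := by
      show C1 {b, c} ∪ C2 (({b, c} : Finset X).filter fun y => y ∉ E (C1 {b, c})) = {b}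
      have h1 : C1 {b, c} = ∅ := by
        rw [hC1]
        refine Finset.filter_false_of_mem fun x hx => ?_
        rw [Finset.mem_insert, Finset.mem_singleton] at hx
        rcases hx with hx | hx <;> (subst hx; assumption)
      rw [h1]
      have h2 : (({b, c} : Finset X).filter fun y => y ∉ E (∅ : Finset X)) = {b, c} := by
        refine Finset.filter_true_of_mem fun x hx => ?_
        rw [Finset.mem_insert, Finset.mem_singleton] at hx
        rcases hx with hx | hx <;> (subst hx; assumption)
      rw [h2]
      have h3 : C2 {b, c} = {b} := by
        ext y
        rw [hC2mem]
        simp only [Finset.mem_insert, Finset.mem_singleton]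
        constructor
        · rintro ⟨h1', h2' | ⟨hyc, h3'⟩⟩
          · exact h2'
          · exact absurd (Or.inl trivial) h3'
        · intro h; exact ⟨Or.inl h, Or.inl h⟩
      rw [h3, Finset.empty_union]
    have eRHS : lexComp E C1 C2 (Z ∪ {b}) = Z := by
      show C1 (Z ∪ {b}) ∪ C2 ((Z ∪ {b}).filter fun y => y ∉ E (C1 (Z ∪ {b}))) = Z
      have h1 : C1 (Z ∪ {b}) = Z := by
        rw [hC1]
        ext y
        simp only [Finset.mem_filter, Finset.mem_union, Finset.mem_singleton]
        tauto
      rw [h1]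
      have h2 : ((Z ∪ {b}).filter fun y => y ∉ E Z) = ∅ := by
        refine Finset.filter_false_of_mem fun x hx hne => ?_
        rw [Finset.mem_union, Finset.mem_singleton] at hx
        rcases hx with hx | hx
        · exact hne (hdil Z (Finset.mem_coe.2 hx))
        · subst hx; exact hne hbE
      rw [h2, hC2e, Finset.union_empty]
    have eLHS : lexComp E C1 C2 (Z ∪ {b, c}) = Z ∪ {c} := by
      show C1 (Z ∪ {b, c}) ∪ C2 ((Z ∪ {b, c}).filter fun y => y ∉ E (C1 (Z ∪ {b, c})))
          = Z ∪ {c}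
      have h1 : C1 (Z ∪ {b, c}) = Z := by
        rw [hC1]
        ext y
        simp only [Finset.mem_filter, Finset.mem_union, Finset.mem_insert,
          Finset.mem_singleton]
        constructor
        · rintro ⟨-, h⟩; exact h
        · intro h; exact ⟨Or.inl h, h⟩
      rw [h1]
      have h2 : ((Z ∪ {b, c}).filter fun y => y ∉ E Z) = {c} := by
        ext y
        simp only [Finset.mem_filter, Finset.mem_union, Finset.mem_insert,
          Finset.mem_singleton]
        constructor
        · rintro ⟨hy | hy | hy, hne⟩
          · exact absurd (hdil Z (Finset.mem_coe.2 hy)) hne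
          · subst hy; exact absurd hbE hne
          · exact hy
        · intro hy; subst hy; exact ⟨Or.inr (Or.inr rfl), hc⟩
      rw [h2]
      have h3 : C2 {c} = {c} := by
        ext y
        rw [hC2mem]
        simp only [Finset.mem_singleton]
        constructor
        · rintro ⟨h1', -⟩; exact h1'
        · intro hy
          exact ⟨hy, Or.inr ⟨hy, hbc⟩⟩
      rw [h3]
    rw [eLHS, eZ, ebc, eRHS] at hPI
    have : c ∈ Z := by
      have h : c ∈ Z ∪ {c} := Finset.mem_union_right Z (Finset.mem_singleton_self c)
      rwa [hPI] at h
    exact hcZ this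
end
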